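/- Let S be a monoid satisfying the identities σ1: x y t1 x t2 y ≈ y x t1 x t2 y and σ2: x t1 y t2 x y ≈ x t1 y t2 y x. Then for every identity of S having property P_1 there exists an identity τ of S having property P_{1b} such that the given identity is a consequence of the set consisting of all almost-linear identities of S, the set {σ1, σ2}^δ, and {τ}. -/

import Mathlib

/-- Words over a countably infinite alphabet of variables (identified with ℕ). -/
abbrev Wd := List ℕ

/-- Evaluation of a word in a monoid under an assignment of the variables. -/
def evalWord {M : Type*} [Monoid M] (φ : ℕ → M) (u : Wd) : M := (u.map φ).prod

/-- A monoid `M` satisfies the identity `e = (u, v)`. -/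
def Sat (M : Type*) [Monoid M] (e : Wd × Wd) : Prop :=
  ∀ φ : ℕ → M, evalWord φ e.1 = evalWord φ e.2

/-- The identity `e` is a consequence of the set of identities `Γ`:
every monoid satisfying all identities of `Γ` satisfies `e`. -/
def Consequence (Γ : Set (Wd × Wd)) (e : Wd × Wd) : Prop :=
  ∀ (M : Type) [Monoid M], (∀ f ∈ Γ, Sat M f) → Sat M e

/-- The content of a word: the set of variables occurring in it. -/
def conW (u : Wd) : Set ℕ := {x | x ∈ u}

/-- The set of linear (exactly once occurring) variables of a word. -/
def linW (u : Wd) : Set ℕ := {x | u.count x = 1}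

/-- The set of non-linear (more than once occurring) variables of a word. -/
def nonW (u : Wd) : Set ℕ := {x | 2 ≤ u.count x}

/-- `restrict u X` is the word obtained from `u` by deleting all occurrences of
all variables not in `X`. -/
noncomputable def restrict (u : Wd) (X : Set ℕ) : Wd :=
  u.filter (fun a => @decide (a ∈ X) (Classical.propDecidable _))

/-- The closure of a set of identities under deleting variables. -/
def delta (Γ : Set (Wd × Wd)) : Set (Wd × Wd) :=
  {e | ∃ f ∈ Γ, ∃ X : Set ℕ, e = (restrict f.1 X, restrict f.2 X)}

/-- A word is almost-linear if it has at most one non-linear variable. -/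
def AlmostLinearW (u : Wd) : Prop := ∀ x y, 2 ≤ u.count x → 2 ≤ u.count y → x = y

/-- An identity is almost-linear if both of its sides are almost-linear words. -/
def AlmostLinearId (e : Wd × Wd) : Prop := AlmostLinearW e.1 ∧ AlmostLinearW e.2

/-- An identity is regular if both sides have the same content. -/
def RegularId (e : Wd × Wd) : Prop := conW e.1 = conW e.2

/-- A word `u` is an isoterm for a monoid `M` if the only word `v` with
`M ⊨ u ≈ v` is `u` itself. -/
def Isoterm (M : Type*) [Monoid M] (u : Wd) : Prop := ∀ v : Wd, Sat M (u, v) → v = u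

/-- An identity `u ≈ v` is block-balanced if `u(x, lin u) = v(x, lin u)`
for every variable `x`. -/
def BlockBalanced (e : Wd × Wd) : Prop :=
  ∀ x : ℕ, restrict e.1 ({x} ∪ linW e.1) = restrict e.2 ({x} ∪ linW e.1)

/-- A monoid is finitely based: some finite set of its identities implies all of them. -/
def FinitelyBased (S : Type*) [Monoid S] : Prop :=
  ∃ Γ : Set (Wd × Wd), Γ.Finite ∧ (∀ e ∈ Γ, Sat S e) ∧
    ∀ e : Wd × Wd, Sat S e → Consequence Γ e

/-- Index of the first occurrence of a variable in a word. -/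
def firstIdx (u : Wd) (x : ℕ) : ℕ := u.idxOf x

/-- Index of the last occurrence of a variable in a word. -/
def lastIdx (u : Wd) (x : ℕ) : ℕ := u.length - 1 - u.reverse.idxOf x

/-- σ1 : x y t1 x t2 y ≈ y x t1 x t2 y, with x=0, y=1, t1=2, t2=3. -/
def sigma1 : Wd × Wd := ([0,1,2,0,3,1], [1,0,2,0,3,1])

/-- σμ : x t1 x y t2 y ≈ x t1 y x t2 y, with x=0, y=1, t1=2, t2=3. -/
def sigmaMu : Wd × Wd := ([0,2,0,1,3,1], [0,2,1,0,3,1])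

/-- σ2 : x t1 y t2 x y ≈ x t1 y t2 y x, with x=0, y=1, t1=2, t2=3. -/
def sigma2 : Wd × Wd := ([0,2,1,3,0,1], [0,2,1,3,1,0])

/-- Property P₁: same linear and non-linear variables and the same word of
linear variables. -/
def P1 (e : Wd × Wd) : Prop :=
  linW e.1 = linW e.2 ∧ nonW e.1 = nonW e.2 ∧
  restrict e.1 (linW e.1) = restrict e.2 (linW e.1)

/-- No linear variable of `u` occurs in `u` between two occurrences of `x`. -/
def NoLinBetween (u : Wd) (x : ℕ) : Prop :=
  ∀ i k j : ℕ, i < k → k < j → j < u.length →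
    u.getD i 0 = x → u.getD j 0 = x → u.getD k 0 ∉ linW u

/-- Property P₁ᵦ: property P₁, and for every non-linear variable `x` on which
the two sides disagree (after deleting everything except `x` and the linear
variables), all occurrences of `x` lie in a single block on each side. -/
def P1b (e : Wd × Wd) : Prop :=
  P1 e ∧
  ∀ x ∈ nonW e.1,
    restrict e.1 ({x} ∪ linW e.1) ≠ restrict e.2 ({x} ∪ linW e.1) →
      NoLinBetween e.1 x ∧ NoLinBetween e.2 x


/-!
Write `L = lin u`. By `σ₁` and `σ₂`, two adjacent letters commute as soon as both of them occur
again on one side of the pair. Suppose a letter of `L` lies between two occurrences of a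
non-linear `x` in `w`. Then every maximal `L`-free block of `w` has an occurrence of `x` outside
it, and its other letters are non-linear, so commutations gather the occurrences of `x` inside
each block into a single run. The gathered word is `A · s(w(x, L)) · R` for a substitution `s`
fixing `x`, and one application of the almost-linear identity `u(x, L) ≈ v(x, L)` replaces
`w(x, L)` by `z(x, L)` in it without changing any other projection `w(y, L)`.

Start from `(w, z) = (u, v)` and treat the letters one after the other. Until `x` is treated,
`w(x, L) ≈ z(x, L)` is `u(x, L) ≈ v(x, L)`; if the two sides differ and `x` straddles a letter of
`L` in `w` (or in `z`), rewrite `w` (or `z`) as above. The final pair is `τ`: wherever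
`w(x, L) ≠ z(x, L)`, no letter of `L` lies between two occurrences of `x` on either side, and
`u ≈ w ≈ z ≈ v`.
-/

section Restrict

variable {u v : Wd} {X Y : Set ℕ} {a : ℕ}

theorem restrict_cons_of_mem (h : a ∈ X) : restrict (a :: u) X = a :: restrict u X := by
  simp [restrict, h]

theorem restrict_cons_of_not_mem (h : a ∉ X) : restrict (a :: u) X = restrict u X := by
  simp [restrict, h]

@[simp] theorem restrict_append : restrict (u ++ v) X = restrict u X ++ restrict v X :=
  List.filter_append ..

@[simp] theorem mem_restrict : a ∈ restrict u X ↔ a ∈ u ∧ a ∈ X := by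
  simp [restrict]

theorem restrict_congr (h : ∀ c ∈ u, c ∈ X ↔ c ∈ Y) : restrict u X = restrict u Y :=
  List.filter_congr fun c hc => by simp [h c hc]

theorem restrict_restrict_of_subset (h : Y ⊆ X) : restrict (restrict u X) Y = restrict u Y := by
  simp only [restrict, List.filter_filter]
  exact List.filter_congr fun c _ => by
    by_cases hY : c ∈ Y
    · simp [hY, h hY]
    · simp [hY]

theorem restrict_insert_of_not_mem (h : a ∉ u) : restrict u (insert a X) = restrict u X :=
  restrict_congr fun c hc => by simp [show c ≠ a from fun hca => h (hca ▸ hc)]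

theorem restrict_eq_self (h : ∀ c ∈ u, c ∈ X) : restrict u X = u :=
  List.filter_eq_self.mpr fun c hc => by simp [h c hc]

theorem restrict_eq_nil (h : ∀ c ∈ u, c ∉ X) : restrict u X = [] :=
  List.filter_eq_nil_iff.mpr fun c hc => by simp [h c hc]

theorem count_restrict (h : a ∈ X) : (restrict u X).count a = u.count a :=
  List.count_filter (by simp [h])

theorem restrict_flatMap (s : ℕ → Wd) :
    restrict (u.flatMap s) X = u.flatMap fun c => restrict (s c) X :=
  List.filter_flatMap

theorem restrict_insert_of_disjoint (h : ∀ c ∈ u, c ∉ X) :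
    restrict u (insert a X) = List.replicate (u.count a) a := by
  induction u with
  | nil => rfl
  | cons c u ih =>
    have hc := h c (by simp)
    have ih := ih fun d hd => h d (by simp [hd])
    by_cases hca : c = a
    · subst hca
      rw [restrict_cons_of_mem (by simp), ih, List.count_cons_self, List.replicate_succ]
    · rw [restrict_cons_of_not_mem (by simp [hca, hc]), ih, List.count_cons_of_ne hca]

theorem flatMap_restrict {g : ℕ → Wd} (h : ∀ c ∈ u, c ∈ X ∨ g c = []) :
    (restrict u X).flatMap g = u.flatMap g := by
  induction u with
  | nil => rfl
  | cons c u ih =>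
    have ih := ih fun d hd => h d (by simp [hd])
    by_cases hc : c ∈ X
    · simp [restrict_cons_of_mem hc, ih]
    · simp [restrict_cons_of_not_mem hc, ih, (h c (by simp)).resolve_left hc]

theorem count_eq_of_restrict_eq (h : restrict u (insert a X) = restrict v (insert a X)) :
    u.count a = v.count a := by
  rw [← count_restrict (Set.mem_insert a X), h, count_restrict (Set.mem_insert a X)]

theorem two_le_count_of_restrict_eq
    (h : ∀ y, restrict u (insert y X) = restrict v (insert y X))
    (hu : ∀ c ∈ u, c ∉ X → 2 ≤ u.count c) : ∀ c ∈ v, c ∉ X → 2 ≤ v.count c := by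
  intro c hc hcX
  have hcount := count_eq_of_restrict_eq (h c)
  rw [← hcount]
  exact hu c (List.count_pos_iff.mp (hcount ▸ List.count_pos_iff.mpr hc)) hcX

end Restrict

section Evaluation

variable {M : Type*} [Monoid M] (φ : ℕ → M)

@[simp] theorem evalWord_cons (a : ℕ) (u : Wd) : evalWord φ (a :: u) = φ a * evalWord φ u := by
  simp [evalWord]

@[simp] theorem evalWord_append (u v : Wd) :
    evalWord φ (u ++ v) = evalWord φ u * evalWord φ v := by
  simp [evalWord]

theorem evalWord_flatMap (s : ℕ → Wd) (u : Wd) :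
    evalWord φ (u.flatMap s) = evalWord (fun c => evalWord φ (s c)) u := by
  induction u with
  | nil => rfl
  | cons a u ih => simp [ih]

open Classical in
theorem evalWord_restrict (u : Wd) (X : Set ℕ) :
    evalWord φ (restrict u X) = evalWord (fun c => if c ∈ X then φ c else 1) u := by
  induction u with
  | nil => rfl
  | cons a u ih =>
    by_cases h : a ∈ X
    · simp [restrict_cons_of_mem h, h, ih]
    · simp [restrict_cons_of_not_mem h, h, ih]

end Evaluation

theorem Sat.restrict {M : Type*} [Monoid M] {u v : Wd} (h : Sat M (u, v)) (X : Set ℕ) :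
    Sat M (restrict u X, restrict v X) := by
  classical
  intro φ
  simpa only [evalWord_restrict] using h _

inductive Rewrites (Γ : Set (Wd × Wd)) : Wd → Wd → Prop
  | intro {e : Wd × Wd} (he : e ∈ Γ) (s : ℕ → Wd) (p q : Wd) :
      Rewrites Γ (p ++ e.1.flatMap s ++ q) (p ++ e.2.flatMap s ++ q)

abbrev Derivable (Γ : Set (Wd × Wd)) : Wd → Wd → Prop := Relation.EqvGen (Rewrites Γ)

theorem Derivable.sat {M : Type*} [Monoid M] {Γ : Set (Wd × Wd)} {u v : Wd}
    (h : Derivable Γ u v) (hΓ : ∀ e ∈ Γ, Sat M e) : Sat M (u, v) := by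
  induction h with
  | rel _ _ h =>
    obtain ⟨he, s, p, q⟩ := h
    intro φ
    simp only [evalWord_append, evalWord_flatMap, hΓ _ he _]
  | refl => exact fun _ => rfl
  | symm _ _ _ ih => exact fun φ => (ih φ).symm
  | trans _ _ _ _ _ ih₁ ih₂ => exact fun φ => (ih₁ φ).trans (ih₂ φ)

theorem exists_eq_append_cons_append_cons {a b : ℕ} {l : Wd} (ha : a ∈ l) (hb : b ∈ l)
    (hab : a ≠ b) :
    ∃ l₁ l₂ l₃, l = l₁ ++ a :: l₂ ++ b :: l₃ ∨ l = l₁ ++ b :: l₂ ++ a :: l₃ := by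
  obtain ⟨l₁, l₂, rfl⟩ := List.append_of_mem ha
  rcases List.mem_append.mp hb with hb | hb
  · obtain ⟨m₁, m₂, rfl⟩ := List.append_of_mem hb
    exact ⟨m₁, m₂, l₂, Or.inr (by simp)⟩
  · obtain ⟨m₁, m₂, rfl⟩ := List.append_of_mem ((List.mem_cons.mp hb).resolve_left hab.symm)
    exact ⟨l₁, m₁, m₂, Or.inl (by simp)⟩

section Gathering

variable {Γ : Set (Wd × Wd)}

theorem derivable_swap (hσ₁ : sigma1 ∈ Γ) (hσ₂ : sigma2 ∈ Γ) {a b : ℕ} {P Q : Wd}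
    (h : (a ∈ P ∧ b ∈ P) ∨ (a ∈ Q ∧ b ∈ Q)) :
    Derivable Γ (P ++ a :: b :: Q) (P ++ b :: a :: Q) := by
  rcases eq_or_ne a b with rfl | hab
  · exact .refl _
  rcases h with ⟨ha, hb⟩ | ⟨ha, hb⟩
  · obtain ⟨P₁, P₂, P₃, rfl | rfl⟩ := exists_eq_append_cons_append_cons ha hb hab
    · simpa [sigma2] using Relation.EqvGen.rel _ _
        (Rewrites.intro hσ₂ (fun n => [[a], [b], P₂, P₃].getD n []) P₁ Q)
    · simpa [sigma2] using (Relation.EqvGen.rel _ _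
        (Rewrites.intro hσ₂ (fun n => [[b], [a], P₂, P₃].getD n []) P₁ Q)).symm
  · obtain ⟨Q₁, Q₂, Q₃, rfl | rfl⟩ := exists_eq_append_cons_append_cons ha hb hab
    · simpa [sigma1] using Relation.EqvGen.rel _ _
        (Rewrites.intro hσ₁ (fun n => [[a], [b], Q₁, Q₂].getD n []) P Q₃)
    · simpa [sigma1] using (Relation.EqvGen.rel _ _
        (Rewrites.intro hσ₁ (fun n => [[b], [a], Q₁, Q₂].getD n []) P Q₃)).symm

/-- Each `g ∈ G` occurs again on some side of the pair `g x`, and so does `x`. -/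
theorem derivable_move (hσ₁ : sigma1 ∈ Γ) (hσ₂ : sigma2 ∈ Γ) {x : ℕ} {Q : Wd} (hQ : x ∈ Q)
    (G : Wd) : ∀ {P : Wd}, x ∈ P → (∀ g ∈ G, 2 ≤ (P ++ G ++ x :: Q).count g) →
      Derivable Γ (P ++ G ++ x :: Q) (P ++ x :: G ++ Q) := by
  induction G with
  | nil => exact fun _ _ => by simpa using Relation.EqvGen.refl _
  | cons g G ih =>
    intro P hP hG
    have hswap : (g ∈ P ∧ x ∈ P) ∨ (g ∈ G ++ Q ∧ x ∈ G ++ Q) := by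
      by_cases hgP : g ∈ P
      · exact Or.inl ⟨hgP, hP⟩
      have hgx : g ≠ x := fun h => hgP (h ▸ hP)
      refine Or.inr ⟨?_, by simp [hQ]⟩
      have hcount := hG g (by simp)
      rw [← List.count_pos_iff, List.count_append]
      simp only [List.count_append, List.count_cons_self, List.count_cons_of_ne hgx.symm,
        List.count_eq_zero_of_not_mem hgP] at hcount
      omega
    have hmoved := ih (P := P ++ [g]) (by simp [hP]) fun c hc => by
      simpa using hG c (by simp [hc])
    simp only [List.append_assoc, List.cons_append] at hmoved ⊢
    exact hmoved.trans _ _ _ (by simpa using derivable_swap hσ₁ hσ₂ (P := P) (Q := G ++ Q) hswap)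

theorem exists_gather_of_mem_right (hσ₁ : sigma1 ∈ Γ) (hσ₂ : sigma2 ∈ Γ) {x : ℕ} {P : Wd}
    (B : Wd) : ∀ {Q : Wd}, x ∈ Q → (∀ c ∈ B, c ≠ x → 2 ≤ (P ++ B ++ Q).count c) →
      ∃ A k C, x ∉ A ∧ x ∉ C ∧ (A ++ List.replicate k x ++ C).Perm B ∧
        Derivable Γ (P ++ B ++ Q) (P ++ (A ++ List.replicate k x ++ C) ++ Q) := by
  induction B using List.reverseRecOn with
  | nil => exact fun _ _ => ⟨[], 0, [], by simp, by simp, by simp, .refl _⟩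
  | append_singleton B b ih =>
    intro Q hQ hB
    obtain ⟨A, k, C, hA, hC, hperm, hder⟩ :=
      ih (Q := b :: Q) (by simp [hQ]) fun c hc hcx => by simpa using hB c (by simp [hc]) hcx
    simp only [List.append_assoc, List.singleton_append] at hder ⊢
    by_cases hbx : b = x
    swap
    · exact ⟨A, k, C ++ [b], hA, by simp [hC, Ne.symm hbx],
        by simpa using hperm.append_right [b], by simpa using hder⟩
    subst hbx
    rcases Nat.eq_zero_or_pos k with rfl | hk
    · exact ⟨A ++ C, 1, [], by simp [hA, hC], by simp,
        by simpa using hperm.append_right [b], by simpa using hder⟩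
    have hperm' : (A ++ List.replicate k b ++ b :: C).Perm (B ++ [b]) :=
      List.perm_middle.trans ((List.perm_append_singleton _ _).symm.trans (hperm.append_right _))
    refine ⟨A, k + 1, C, hA, hC, by simpa [List.replicate_succ'] using hperm',
      hder.trans _ _ _ ?_⟩
    have hmove := derivable_move hσ₁ hσ₂ hQ C (Γ := Γ) (P := P ++ A ++ List.replicate k b)
      (by simp [hk.ne']) fun c hc => by
        have hcB : c ∈ B := hperm.subset (by simp [hc])
        rw [show P ++ A ++ List.replicate k b ++ C ++ b :: Q =
            P ++ (A ++ List.replicate k b ++ C) ++ b :: Q by simp,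
          ((hperm.append_left P).append_right (b :: Q)).count_eq c]
        simpa using hB c (by simp [hcB]) fun h => hC (h ▸ hc)
    simpa [List.replicate_succ'] using hmove

theorem exists_gather_of_mem_left (hσ₁ : sigma1 ∈ Γ) (hσ₂ : sigma2 ∈ Γ) {x : ℕ} {Q : Wd}
    (B : Wd) : ∀ {P : Wd}, x ∈ P → (∀ c ∈ B, c ≠ x → 2 ≤ (P ++ B ++ Q).count c) →
      ∃ A k C, x ∉ A ∧ x ∉ C ∧ (A ++ List.replicate k x ++ C).Perm B ∧
        Derivable Γ (P ++ B ++ Q) (P ++ (A ++ List.replicate k x ++ C) ++ Q) := by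
  induction B with
  | nil => exact fun _ _ => ⟨[], 0, [], by simp, by simp, by simp, .refl _⟩
  | cons b B ih =>
    intro P hP hB
    obtain ⟨A, k, C, hA, hC, hperm, hder⟩ :=
      ih (P := P ++ [b]) (by simp [hP]) fun c hc hcx => by simpa using hB c (by simp [hc]) hcx
    simp only [List.append_assoc, List.cons_append] at hder ⊢
    by_cases hbx : b = x
    swap
    · exact ⟨b :: A, k, C, by simp [hA, Ne.symm hbx], hC,
        by simpa using hperm.cons b, by simpa using hder⟩
    subst hbx
    rcases Nat.eq_zero_or_pos k with rfl | hk
    · exact ⟨[], 1, A ++ C, by simp, by simp [hA, hC],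
        by simpa using hperm.cons b, by simpa using hder⟩
    have hperm' : (A ++ b :: (List.replicate k b ++ C)).Perm (b :: B) :=
      List.perm_middle.trans (by simpa using hperm.cons b)
    refine ⟨A, k + 1, C, hA, hC, by simpa [List.replicate_succ] using hperm',
      hder.trans _ _ _ ?_⟩
    have hmove := derivable_move hσ₁ hσ₂ (Γ := Γ) (Q := List.replicate k b ++ C ++ Q)
      (by simp [hk.ne']) A hP fun c hc => by
        have hcB : c ∈ B := hperm.subset (by simp [hc])
        rw [List.append_assoc, (List.perm_middle.append_left P).count_eq c, show
            P ++ b :: (A ++ (List.replicate k b ++ C ++ Q)) =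
              P ++ [b] ++ (A ++ List.replicate k b ++ C) ++ Q by simp,
          ((hperm.append_left (P ++ [b])).append_right Q).count_eq c]
        simpa using hB c (by simp [hcB]) fun h => hA (h ▸ hc)
    simpa [List.replicate_succ] using hmove.symm

theorem exists_gather (hσ₁ : sigma1 ∈ Γ) (hσ₂ : sigma2 ∈ Γ) {x : ℕ} {P Q : Wd}
    (hx : x ∈ P ∨ x ∈ Q) (B : Wd) (hB : ∀ c ∈ B, c ≠ x → 2 ≤ (P ++ B ++ Q).count c) :
    ∃ A k C, x ∉ A ∧ x ∉ C ∧ (A ++ List.replicate k x ++ C).Perm B ∧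
      Derivable Γ (P ++ B ++ Q) (P ++ (A ++ List.replicate k x ++ C) ++ Q) :=
  hx.elim (fun hP => exists_gather_of_mem_left hσ₁ hσ₂ B hP hB)
    (fun hQ => exists_gather_of_mem_right hσ₁ hσ₂ B hQ hB)

end Gathering

def Straddles (x : ℕ) (L : Set ℕ) (w : Wd) : Prop :=
  ∃ w₁ t w₂, w = w₁ ++ t :: w₂ ∧ t ∈ L ∧ x ∈ w₁ ∧ x ∈ w₂

theorem Straddles.mem_left_or_mem_right {x : ℕ} {L : Set ℕ} {P B Q : Wd}
    (h : Straddles x L (P ++ B ++ Q)) (hB : ∀ c ∈ B, c ∉ L) : x ∈ P ∨ x ∈ Q := by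
  obtain ⟨w₁, t, w₂, hw, ht, h₁, h₂⟩ := h
  rw [List.append_assoc, List.append_eq_append_iff] at hw
  rcases hw with ⟨a, rfl, hw⟩ | ⟨c, rfl, -⟩
  · rw [List.append_eq_append_iff] at hw
    rcases hw with ⟨a', -, rfl⟩ | ⟨c', rfl, hw⟩
    · exact Or.inr (by simp [h₂])
    · rcases c' with _ | ⟨d, c'⟩
      · exact Or.inr (by rw [List.nil_append] at hw; simp [← hw, h₂])
      · obtain ⟨rfl, -⟩ := List.cons.inj hw
        exact absurd ht (hB _ (by simp))
  · exact Or.inl (by simp [h₁])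

theorem noLinBetween_of_not_straddles {w : Wd} {y : ℕ}
    (h : ¬Straddles y (linW w) (restrict w (insert y (linW w)))) : NoLinBetween w y := by
  intro i k j hik hkj hj hi hj' hk
  apply h
  have hk' : k < w.length := by omega
  simp only [List.getD_eq_getElem?_getD, List.getElem?_eq_getElem hj,
    List.getElem?_eq_getElem hk', List.getElem?_eq_getElem (by omega : i < w.length),
    Option.getD_some] at hi hj' hk
  refine ⟨restrict (w.take k) (insert y (linW w)), w[k],
    restrict (w.drop (k + 1)) (insert y (linW w)), ?_, hk, ?_, ?_⟩
  · rw [← restrict_cons_of_mem (Set.mem_insert_of_mem _ hk), ← restrict_append,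
      List.getElem_cons_drop, List.take_append_drop]
  · have hi' : i < (w.take k).length := by simp only [List.length_take]; omega
    refine mem_restrict.mpr ⟨List.mem_iff_getElem.mpr ⟨i, hi', ?_⟩, by simp⟩
    simp [hi]
  · have hj'' : j - (k + 1) < (w.drop (k + 1)).length := by simp only [List.length_drop]; omega
    refine mem_restrict.mpr ⟨List.mem_iff_getElem.mpr ⟨j - (k + 1), hj'', ?_⟩, by simp⟩
    simp [show k + 1 + (j - (k + 1)) = j by omega, hj']

/-- A gathered word `A₀ x^k₀ C₀ t₁ A₁ x^k₁ C₁ ⋯ tₘ Aₘ x^kₘ Cₘ` is `A₀ · s(x^k₀ t₁ ⋯ tₘ x^kₘ) · Cₘ`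
with `s tᵢ = Cᵢ₋₁ tᵢ Aᵢ`. -/
structure IsSplitting (x : ℕ) (L : Set ℕ) (A R : Wd) (s : ℕ → Wd) : Prop where
  apply_self : s x = [x]
  restrict_apply : ∀ t ∈ L, restrict (s t) (insert x L) = [t]
  restrict_left : restrict A (insert x L) = []
  restrict_right : restrict R (insert x L) = []

namespace IsSplitting

variable {x : ℕ} {L : Set ℕ} {A R : Wd} {s : ℕ → Wd}

theorem restrict_eq (h : IsSplitting x L A R s) {q : Wd} (hq : ∀ c ∈ q, c ∈ insert x L) :
    restrict (A ++ q.flatMap s ++ R) (insert x L) = q := by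
  rw [restrict_append, restrict_append, h.restrict_left, h.restrict_right, restrict_flatMap,
    List.nil_append, List.append_nil, List.flatMap_congr (g := fun c => [c]),
    List.flatMap_singleton']
  intro c hc
  rcases hq c hc with rfl | hc
  · rw [h.apply_self, restrict_eq_self (by simp)]
  · exact h.restrict_apply c hc

theorem restrict_eq_of_ne (h : IsSplitting x L A R s) (hx : x ∉ L) {y : ℕ} (hy : y ≠ x)
    {p q : Wd} (hp : ∀ c ∈ p, c ∈ insert x L) (hq : ∀ c ∈ q, c ∈ insert x L)
    (hpq : restrict p L = restrict q L) :
    restrict (A ++ p.flatMap s ++ R) (insert y L) =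
      restrict (A ++ q.flatMap s ++ R) (insert y L) := by
  have hsx : restrict (s x) (insert y L) = [] := by
    rw [h.apply_self, restrict_eq_nil]
    simp [hy.symm, hx]
  have key : ∀ r : Wd, (∀ c ∈ r, c ∈ insert x L) →
      r.flatMap (fun c => restrict (s c) (insert y L)) =
        (restrict r L).flatMap (fun c => restrict (s c) (insert y L)) := by
    refine fun r hr => (flatMap_restrict fun c hc => ?_).symm
    rcases hr c hc with rfl | hc
    · exact Or.inr hsx
    · exact Or.inl hc
  simp only [restrict_append, restrict_flatMap, key p hp, key q hq, hpq]

theorem update (h : IsSplitting x L A R s) (hx : x ∉ L) {t : ℕ} (ht : t ∈ L) {A₀ C₀ : Wd}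
    (hA₀ : restrict A₀ (insert x L) = []) (hC₀ : restrict C₀ (insert x L) = []) :
    IsSplitting x L A₀ R (Function.update s t (C₀ ++ t :: A)) := by
  have htx : x ≠ t := fun hxt => hx (hxt ▸ ht)
  refine ⟨by rw [Function.update_of_ne htx, h.apply_self], fun t' ht' => ?_, hA₀,
    h.restrict_right⟩
  rcases eq_or_ne t' t with rfl | ht't
  · rw [Function.update_self, restrict_append, restrict_cons_of_mem (by simp [ht']), hC₀,
      h.restrict_left]
    rfl
  · rw [Function.update_of_ne ht't, h.restrict_apply t' ht']

end IsSplitting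

theorem flatMap_update_replicate_append {x : ℕ} {s : ℕ → Wd} (hs : s x = [x]) {t : ℕ}
    (htx : t ≠ x) {p : Wd} (htp : t ∉ p) (k : ℕ) (D : Wd) :
    (List.replicate k x ++ t :: p).flatMap (Function.update s t D) =
      List.replicate k x ++ D ++ p.flatMap s := by
  have hp : p.flatMap (Function.update s t D) = p.flatMap s :=
    List.flatMap_congr fun c hc => Function.update_of_ne (fun h : c = t => htp (h ▸ hc)) _ _
  simp [List.flatMap_replicate, Function.update_of_ne htx.symm, hs, hp]

section Splitting

variable {Γ : Set (Wd × Wd)} {x : ℕ} {L : Set ℕ}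

theorem exists_gather_block (hσ₁ : sigma1 ∈ Γ) (hσ₂ : sigma2 ∈ Γ) (hx : x ∉ L) {P B Q : Wd}
    (hB : ∀ c ∈ B, c ∉ L) (hcount : ∀ c ∈ P ++ B ++ Q, c ∉ L → 2 ≤ (P ++ B ++ Q).count c)
    (hstr : Straddles x L (restrict (P ++ B ++ Q) (insert x L))) :
    ∃ A C, restrict A (insert x L) = [] ∧ restrict C (insert x L) = [] ∧
      Derivable Γ (P ++ B ++ Q) (P ++ (A ++ List.replicate (B.count x) x ++ C) ++ Q) ∧
      ∀ y, restrict (A ++ List.replicate (B.count x) x ++ C) (insert y L) =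
        restrict B (insert y L) := by
  rw [restrict_append, restrict_append] at hstr
  have hside : x ∈ P ∨ x ∈ Q := by
    simpa [hx] using hstr.mem_left_or_mem_right fun c hc => hB c (mem_restrict.mp hc).1
  obtain ⟨A, k, C, hA, hC, hperm, hder⟩ := exists_gather hσ₁ hσ₂ (Γ := Γ) hside B
    fun c hc _ => hcount c (by simp [hc]) (hB c hc)
  have hk : B.count x = k := by
    simp [← hperm.count_eq, List.count_append, List.count_eq_zero_of_not_mem hA,
      List.count_eq_zero_of_not_mem hC]
  have hfree : ∀ c ∈ A ++ List.replicate k x ++ C, c ∉ L := fun c hc => hB c (hperm.subset hc)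
  refine ⟨A, C, restrict_eq_nil fun c hc => ?_, restrict_eq_nil fun c hc => ?_, hk ▸ hder,
    fun y => ?_⟩
  · simpa [hfree c (by simp [hc])] using fun h : c = x => hA (h ▸ hc)
  · simpa [hfree c (by simp [hc])] using fun h : c = x => hC (h ▸ hc)
  · rw [hk, restrict_insert_of_disjoint hfree, restrict_insert_of_disjoint hB, hperm.count_eq]

theorem exists_splitting (hσ₁ : sigma1 ∈ Γ) (hσ₂ : sigma2 ∈ Γ) (hx : x ∉ L) (w : Wd) :
    ∀ {P B : Wd}, (∀ c ∈ B, c ∉ L) →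
      (∀ c ∈ P ++ B ++ w, c ∉ L → 2 ≤ (P ++ B ++ w).count c) →
      Straddles x L (restrict (P ++ B ++ w) (insert x L)) → (restrict w L).Nodup →
      ∃ A R s, IsSplitting x L A R s ∧
        Derivable Γ (P ++ B ++ w) (P ++ A ++ (restrict (B ++ w) (insert x L)).flatMap s ++ R) ∧
        ∀ y, restrict (P ++ A ++ (restrict (B ++ w) (insert x L)).flatMap s ++ R) (insert y L) =
          restrict (P ++ B ++ w) (insert y L) := by
  induction w with
  | nil =>
    intro P B hB hcount hstr _
    obtain ⟨A, C, hA, hC, hder, hproj⟩ := exists_gather_block hσ₁ hσ₂ hx hB hcount hstr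
    refine ⟨A, C, fun c => [c], ⟨rfl, fun t ht => restrict_eq_self (by simp [ht]), hA, hC⟩,
      ?_, fun y => ?_⟩
    · simpa [restrict_insert_of_disjoint hB, List.flatMap_singleton'] using hder
    · simpa [restrict_insert_of_disjoint hB, List.flatMap_singleton'] using hproj y
  | cons t w ih =>
    intro P B hB hcount hstr hnd
    by_cases ht : t ∈ L
    swap
    · simpa using ih (P := P) (B := B ++ [t]) (by simpa [or_imp, forall_and, ht] using hB)
        (by simpa using hcount) (by simpa using hstr)
        (by simpa [restrict_cons_of_not_mem ht] using hnd)
    rw [restrict_cons_of_mem ht, List.nodup_cons, mem_restrict, not_and] at hnd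
    obtain ⟨A₀, C₀, hA₀, hC₀, hder₀, hproj₀⟩ := exists_gather_block hσ₁ hσ₂ hx hB hcount hstr
    set P' := P ++ (A₀ ++ List.replicate (B.count x) x ++ C₀) ++ [t]
    have hproj' : ∀ y, restrict (P' ++ [] ++ w) (insert y L) =
        restrict (P ++ B ++ t :: w) (insert y L) := fun y => by
      simp [P', ← hproj₀ y]
    obtain ⟨A, R, s, hs, hder, hproj⟩ := ih (P := P') (B := []) (by simp)
      (two_le_count_of_restrict_eq (fun y => (hproj' y).symm) hcount)
      (by rw [hproj']; exact hstr) hnd.2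
    have hword : P ++ A₀ ++ (restrict (B ++ t :: w) (insert x L)).flatMap
        (Function.update s t (C₀ ++ t :: A)) ++ R =
          P' ++ A ++ (restrict ([] ++ w) (insert x L)).flatMap s ++ R := by
      rw [restrict_append, restrict_insert_of_disjoint hB, restrict_cons_of_mem (by simp [ht]),
        flatMap_update_replicate_append hs.apply_self (fun h => hx (h ▸ ht))
          (fun h => hnd.1 (mem_restrict.mp h).1 ht)]
      simp [P']
    refine ⟨A₀, R, _, hs.update hx ht hA₀ hC₀, ?_, fun y => ?_⟩
    · rw [hword]
      exact hder₀.trans _ _ _ (by simpa [P'] using hder)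
    · rw [hword, hproj y, hproj' y]

theorem exists_derivable_of_straddles (hσ₁ : sigma1 ∈ Γ) (hσ₂ : sigma2 ∈ Γ) (hx : x ∉ L)
    {w q : Wd} (hcount : ∀ c ∈ w, c ∉ L → 2 ≤ w.count c)
    (hstr : Straddles x L (restrict w (insert x L))) (hnd : (restrict w L).Nodup)
    (hΓ : Relation.SymmGen (fun p q => (p, q) ∈ Γ) (restrict w (insert x L)) q)
    (hq : ∀ c ∈ q, c ∈ insert x L) (hqL : restrict q L = restrict w L) :
    ∃ w', Derivable Γ w w' ∧ restrict w' (insert x L) = q ∧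
      ∀ y ≠ x, restrict w' (insert y L) = restrict w (insert y L) := by
  obtain ⟨A, R, s, hs, hder, hproj⟩ := exists_splitting hσ₁ hσ₂ hx w (P := []) (B := [])
    (by simp) (by simpa using hcount) (by simpa using hstr) hnd
  simp only [List.nil_append] at hder hproj
  refine ⟨A ++ q.flatMap s ++ R, hder.trans _ _ _ ?_, hs.restrict_eq hq, fun y hy => ?_⟩
  · rcases hΓ with h | h
    · exact .rel _ _ (by simpa using Rewrites.intro h s A R)
    · exact .symm _ _ (.rel _ _ (by simpa using Rewrites.intro h s A R))
  · rw [← hproj y, hs.restrict_eq_of_ne hx hy (fun c hc => (mem_restrict.mp hc).2) hq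
      (by rw [restrict_restrict_of_subset (Set.subset_insert _ _), hqL])]

end Splitting

section Reduction

variable {Γ : Set (Wd × Wd)} {L N : Set ℕ} {w z : Wd}

structure ReductionState (Γ : Set (Wd × Wd)) (L N : Set ℕ) (w z : Wd) : Prop where
  linW_left : linW w = L
  linW_right : linW z = L
  nonW_left : nonW w = N
  nonW_right : nonW z = N
  restrict_lin : restrict w L = restrict z L
  projection : ∀ y, restrict w (insert y L) = restrict z (insert y L) ∨
    Relation.SymmGen (fun p q => (p, q) ∈ Γ) (restrict w (insert y L)) (restrict z (insert y L))

def Settled (L : Set ℕ) (w z : Wd) (y : ℕ) : Prop :=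
  restrict w (insert y L) = restrict z (insert y L) ∨
    (¬Straddles y L (restrict w (insert y L)) ∧ ¬Straddles y L (restrict z (insert y L)))

theorem ReductionState.symm (h : ReductionState Γ L N w z) : ReductionState Γ L N z w :=
  ⟨h.linW_right, h.linW_left, h.nonW_right, h.nonW_left, h.restrict_lin.symm,
    fun y => (h.projection y).imp Eq.symm Relation.SymmGen.symm⟩

theorem setOf_count_eq_of_forall_or {w' : Wd} {S : Set ℕ} (p : ℕ → Prop)
    (hw : {c | p (w.count c)} = S) (hz : {c | p (z.count c)} = S)
    (h : ∀ c, w'.count c = w.count c ∨ w'.count c = z.count c) : {c | p (w'.count c)} = S := by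
  ext c
  rcases h c with hc | hc
  · rw [← hw]; simp [hc]
  · rw [← hz]; simp [hc]

theorem ReductionState.exists_match_left (hσ₁ : sigma1 ∈ Γ) (hσ₂ : sigma2 ∈ Γ)
    (h : ReductionState Γ L N w z) {a : ℕ}
    (hne : restrict w (insert a L) ≠ restrict z (insert a L))
    (hstr : Straddles a L (restrict w (insert a L))) :
    ∃ w', ReductionState Γ L N w' z ∧ Derivable Γ w w' ∧
      restrict w' (insert a L) = restrict z (insert a L) ∧
      ∀ y ≠ a, restrict w' (insert y L) = restrict w (insert y L) := by
  have haL : a ∉ L := fun ha => hne (by rw [Set.insert_eq_of_mem ha]; exact h.restrict_lin)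
  have hcount : ∀ c ∈ w, c ∉ L → 2 ≤ w.count c := fun c hc hcL => by
    have h₁ : w.count c ≠ 1 := fun h₁ => hcL (h.linW_left ▸ h₁)
    have h₂ := List.count_pos_iff.mpr hc
    omega
  have hnd : (restrict w L).Nodup := List.nodup_iff_count_le_one.mpr fun c => by
    by_cases hc : c ∈ L
    · rw [count_restrict hc]
      exact le_of_eq (h.linW_left ▸ hc : c ∈ linW w)
    · simp [List.count_eq_zero_of_not_mem (fun h' => hc (mem_restrict.mp h').2)]
  obtain ⟨w', hder, hwa, hwy⟩ := exists_derivable_of_straddles hσ₁ hσ₂ haL hcount hstr hnd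
    ((h.projection a).resolve_left hne) (fun c hc => (mem_restrict.mp hc).2)
    (by rw [restrict_restrict_of_subset (Set.subset_insert _ _), h.restrict_lin])
  have hcounts : ∀ c, w'.count c = w.count c ∨ w'.count c = z.count c := fun c => by
    rcases eq_or_ne c a with rfl | hca
    · exact Or.inr (count_eq_of_restrict_eq hwa)
    · exact Or.inl (count_eq_of_restrict_eq (hwy c hca))
  refine ⟨w', ⟨setOf_count_eq_of_forall_or (· = 1) h.linW_left h.linW_right hcounts,
    h.linW_right, setOf_count_eq_of_forall_or (2 ≤ ·) h.nonW_left h.nonW_right hcounts,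
    h.nonW_right, ?_, fun y => ?_⟩, hder, hwa, hwy⟩
  · rw [← restrict_restrict_of_subset (Set.subset_insert a L), hwa,
      restrict_restrict_of_subset (Set.subset_insert a L)]
  · rcases eq_or_ne y a with rfl | hya
    · exact Or.inl hwa
    · rw [hwy y hya]; exact h.projection y

theorem ReductionState.exists_settle_letter (hσ₁ : sigma1 ∈ Γ) (hσ₂ : sigma2 ∈ Γ)
    (h : ReductionState Γ L N w z) (a : ℕ) :
    ∃ w' z', ReductionState Γ L N w' z' ∧ Derivable Γ w w' ∧ Derivable Γ z z' ∧
      Settled L w' z' a ∧ ∀ y ≠ a, restrict w' (insert y L) = restrict w (insert y L) ∧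
        restrict z' (insert y L) = restrict z (insert y L) := by
  by_cases heq : restrict w (insert a L) = restrict z (insert a L)
  · exact ⟨w, z, h, .refl _, .refl _, Or.inl heq, fun _ _ => ⟨rfl, rfl⟩⟩
  by_cases hw : Straddles a L (restrict w (insert a L))
  · obtain ⟨w', h', hder, hwa, hwy⟩ := h.exists_match_left hσ₁ hσ₂ heq hw
    exact ⟨w', z, h', hder, .refl _, Or.inl hwa, fun y hy => ⟨hwy y hy, rfl⟩⟩
  by_cases hz : Straddles a L (restrict z (insert a L))
  · obtain ⟨z', h', hder, hza, hzy⟩ := h.symm.exists_match_left hσ₁ hσ₂ (Ne.symm heq) hz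
    exact ⟨w, z', h'.symm, .refl _, hder, Or.inl hza.symm, fun y hy => ⟨rfl, hzy y hy⟩⟩
  exact ⟨w, z, h, .refl _, .refl _, Or.inr ⟨hw, hz⟩, fun _ _ => ⟨rfl, rfl⟩⟩

theorem ReductionState.exists_settled (hσ₁ : sigma1 ∈ Γ) (hσ₂ : sigma2 ∈ Γ) (xs : List ℕ) :
    ∀ {w z : Wd}, ReductionState Γ L N w z → (∀ y ∉ xs, Settled L w z y) →
      ∃ w' z', ReductionState Γ L N w' z' ∧ Derivable Γ w w' ∧ Derivable Γ z z' ∧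
        ∀ y, Settled L w' z' y := by
  induction xs with
  | nil => exact fun h hs => ⟨_, _, h, .refl _, .refl _, fun y => hs y List.not_mem_nil⟩
  | cons a xs ih =>
    intro w z h hs
    obtain ⟨w₁, z₁, h₁, hw₁, hz₁, ha, hsame⟩ := h.exists_settle_letter hσ₁ hσ₂ a
    obtain ⟨w', z', h', hw', hz', hs'⟩ := ih h₁ fun y hy => by
      rcases eq_or_ne y a with rfl | hya
      · exact ha
      · rw [Settled, (hsame y hya).1, (hsame y hya).2]
        exact hs y (by simp [hya, hy])
    exact ⟨w', z', h', hw₁.trans _ _ _ hw', hz₁.trans _ _ _ hz', hs'⟩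

theorem ReductionState.p1b (h : ReductionState Γ L N w z) (hs : ∀ y, Settled L w z y) :
    P1b (w, z) := by
  refine ⟨⟨h.linW_left.trans h.linW_right.symm, h.nonW_left.trans h.nonW_right.symm, ?_⟩,
    fun y _ hne => ?_⟩
  · simpa [h.linW_left] using h.restrict_lin
  · simp only [Set.singleton_union, h.linW_left] at hne
    obtain ⟨hw, hz⟩ := (hs y).resolve_left hne
    exact ⟨noLinBetween_of_not_straddles (by rwa [h.linW_left]),
      noLinBetween_of_not_straddles (by rwa [h.linW_right])⟩

end Reduction

theorem almostLinearW_restrict {w : Wd} {L : Set ℕ} (hL : ∀ c ∈ L, w.count c ≤ 1) (y : ℕ) :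
    AlmostLinearW (restrict w (insert y L)) := by
  have key : ∀ c, 2 ≤ (restrict w (insert y L)).count c → c = y := by
    intro c hc
    by_contra hcy
    have hcL : c ∈ L := by
      simpa [hcy] using (mem_restrict.mp (List.count_pos_iff.mp
        (show 0 < (restrict w (insert y L)).count c by omega))).2
    rw [count_restrict (Set.mem_insert_of_mem _ hcL)] at hc
    have := hL c hcL
    omega
  exact fun a b ha hb => (key a ha).trans (key b hb).symm

theorem subset_delta (Γ : Set (Wd × Wd)) : Γ ⊆ delta Γ :=
  fun e he => ⟨e, he, Set.univ, by simp [restrict_eq_self]⟩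

def reductionBasis (u v : Wd) : Set (Wd × Wd) :=
  {sigma1, sigma2} ∪
    Set.range fun y => (restrict u (insert y (linW u)), restrict v (insert y (linW u)))

theorem sat_reductionBasis {M : Type*} [Monoid M] {u v : Wd} (h1 : Sat M sigma1)
    (h2 : Sat M sigma2)
    (hproj : ∀ y, Sat M (restrict u (insert y (linW u)), restrict v (insert y (linW u)))) :
    ∀ e ∈ reductionBasis u v, Sat M e := by
  rintro e ((rfl | rfl) | ⟨y, rfl⟩)
  exacts [h1, h2, hproj y]

theorem stmt10 (S : Type*) [Monoid S] (h1 : Sat S sigma1) (h2 : Sat S sigma2) :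
    ∀ e : Wd × Wd, Sat S e → P1 e →
      ∃ τ : Wd × Wd, Sat S τ ∧ P1b τ ∧
        Consequence ({f : Wd × Wd | Sat S f ∧ AlmostLinearId f} ∪
          delta {sigma1, sigma2} ∪ {τ}) e := by
  rintro ⟨u, v⟩ huv ⟨hlin, hnon, hres⟩
  have hσ₁ : sigma1 ∈ reductionBasis u v := by simp [reductionBasis]
  have hσ₂ : sigma2 ∈ reductionBasis u v := by simp [reductionBasis]
  have hstart : ReductionState (reductionBasis u v) (linW u) (nonW u) u v :=
    ⟨rfl, hlin.symm, rfl, hnon.symm, hres, fun y => Or.inr (.of_rel (Or.inr ⟨y, rfl⟩))⟩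
  obtain ⟨w, z, hwz, huw, hvz, hset⟩ := hstart.exists_settled hσ₁ hσ₂ (u ++ v) fun y hy => by
    simp only [List.mem_append, not_or] at hy
    exact Or.inl (by rw [restrict_insert_of_not_mem hy.1, restrict_insert_of_not_mem hy.2, hres])
  have hS := sat_reductionBasis h1 h2 fun y => huv.restrict _
  refine ⟨(w, z), fun φ => ((huw.sat hS φ).symm.trans (huv φ)).trans (hvz.sat hS φ),
    hwz.p1b hset, fun M _ hM φ => ?_⟩
  have hM' := sat_reductionBasis (hM _ (Or.inl (Or.inr (subset_delta _ (by simp)))))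
    (hM _ (Or.inl (Or.inr (subset_delta _ (by simp))))) fun y =>
      hM _ (Or.inl (Or.inl ⟨huv.restrict _, almostLinearW_restrict (fun c hc => le_of_eq hc) y,
        almostLinearW_restrict (fun c hc => le_of_eq (hlin ▸ hc : c ∈ linW v)) y⟩))
  exact ((huw.sat hM' φ).trans (hM _ (Or.inr rfl) φ)).trans (hvz.sat hM' φ).symm
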